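/- (Simplified sphere-packing bound) For any 𝔽_{q^m}-linear [n,k,d] sum-rank-metric code, q^{mk} · q^{(m+η-⌊(d-1)/2⌋/ℓ)·⌊(d-1)/2⌋ - ℓ/4} · γ_q^{-ℓ} ≤ q^{mn}. -/

import Mathlib

/-- `γ_q = ∏_{i=1}^∞ (1 - q^{-i})^{-1}`. -/
noncomputable def gammaq (q : ℕ) : ℝ := ∏' i : ℕ, (1 - (q : ℝ)⁻¹ ^ (i + 1))⁻¹

/-- Rank weight of a block `v ∈ Fqm^η`: the `Fq`-dimension of the span of its entries. -/
noncomputable def rkw (Fq : Type) {Fqm : Type} [Field Fq] [Field Fqm] [Algebra Fq Fqm]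
    {η : ℕ} (v : Fin η → Fqm) : ℕ :=
  Module.finrank Fq (Submodule.span Fq (Set.range v))

/-- Sum-rank weight of a vector in `Fqm^(ℓη)`, given as `ℓ` blocks of length `η`. -/
noncomputable def srw (Fq : Type) {Fqm : Type} [Field Fq] [Field Fqm] [Algebra Fq Fqm]
    {ℓ η : ℕ} (x : Fin ℓ → Fin η → Fqm) : ℕ :=
  ∑ i, rkw Fq (x i)

/-- Number of vectors in `Fqm^(ℓη)` of sum-rank weight exactly `t`. -/
noncomputable def VolS (Fq Fqm : Type) [Field Fq] [Field Fqm] [Algebra Fq Fqm]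
    (ℓ η t : ℕ) : ℕ :=
  Nat.card {x : Fin ℓ → Fin η → Fqm // srw Fq x = t}

/-- Number of vectors in `Fqm^(ℓη)` of sum-rank weight at most `t`. -/
noncomputable def VolB (Fq Fqm : Type) [Field Fq] [Field Fqm] [Algebra Fq Fqm]
    (ℓ η t : ℕ) : ℕ :=
  Nat.card {x : Fin ℓ → Fin η → Fqm // srw Fq x ≤ t}

/-!
Balls of sum-rank radius `t = ⌊(d-1)/2⌋` around distinct codewords are disjoint, so
`q^(mk) · |B_t| ≤ q^(mn)`. For the volume, spread `t` as evenly as possible over the `ℓ` blocks,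
`t = ∑ wᵢ` with `wᵢ ∈ {⌊t/ℓ⌋, ⌈t/ℓ⌉}`; then `B_t` contains the product of the rank balls of radii
`wᵢ`. The rank ball of radius `w` in `𝔽_{q^m}^η` contains every vector whose first `w` entries are
`𝔽_q`-linearly independent and whose other entries lie in their span; there are
`∏_{j<w} (q^m - q^j) · q^(w(η-w)) ≥ γ_q⁻¹ · q^(wm + w(η-w))` of them. Finally
`∑ wᵢ (m + η - wᵢ) = (m + η) t - ∑ wᵢ²` and `ℓ ∑ wᵢ² = t² + r (ℓ - r) ≤ t² + ℓ²/4`, `r = t mod ℓ`.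
-/

open Finset

section EulerProduct

variable {x : ℝ}

lemma summable_log_inv_one_sub_pow (hx0 : 0 ≤ x) (hx1 : x < 1) :
    Summable fun i : ℕ => Real.log (1 - x ^ (i + 1))⁻¹ := by
  have h := Real.summable_log_one_add_of_summable
    ((summable_geometric_of_lt_one hx0 hx1).mul_left (-x))
  simpa only [Real.log_inv, pow_succ', neg_mul, ← sub_eq_add_neg] using h.neg

lemma prod_inv_one_sub_pow_le_tprod (hx0 : 0 ≤ x) (hx1 : x < 1) (s : Finset ℕ) :
    ∏ i ∈ s, (1 - x ^ (i + 1))⁻¹ ≤ ∏' i, (1 - x ^ (i + 1))⁻¹ := by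
  have hlt : ∀ i : ℕ, x ^ (i + 1) < 1 := fun i => pow_lt_one₀ hx0 hx1 (by omega)
  have hpos : ∀ i : ℕ, 0 < (1 - x ^ (i + 1))⁻¹ := fun i => inv_pos.2 (sub_pos.2 (hlt i))
  have hsum := summable_log_inv_one_sub_pow hx0 hx1
  rw [← Real.rexp_tsum_eq_tprod hpos hsum, ← Real.exp_log (prod_pos fun i _ => hpos i),
    Real.log_prod fun i _ => (hpos i).ne']
  refine Real.exp_le_exp.2 (hsum.sum_le_tsum s fun i _ => Real.log_nonneg ?_)
  rw [one_le_inv₀ (sub_pos.2 (hlt i))]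
  linarith [pow_nonneg hx0 (i + 1)]

end EulerProduct

lemma one_le_gammaq {q : ℕ} (hq : 1 < q) : 1 ≤ gammaq q := by
  simpa only [prod_empty, gammaq] using prod_inv_one_sub_pow_le_tprod (x := (q : ℝ)⁻¹)
    (by positivity) (inv_lt_one_of_one_lt₀ (by exact_mod_cast hq)) ∅

lemma inv_gammaq_le_prod {q : ℕ} (hq : 1 < q) (s : Finset ℕ) :
    (gammaq q)⁻¹ ≤ ∏ i ∈ s, (1 - (q : ℝ)⁻¹ ^ (i + 1)) := by
  have hx1 : (q : ℝ)⁻¹ < 1 := inv_lt_one_of_one_lt₀ (by exact_mod_cast hq)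
  have hfactor : ∀ i : ℕ, 0 < 1 - (q : ℝ)⁻¹ ^ (i + 1) :=
    fun i => sub_pos.2 (pow_lt_one₀ (by positivity) hx1 (by omega))
  rw [← inv_inv (∏ i ∈ s, _), ← prod_inv_distrib]
  exact inv_anti₀ (prod_pos fun i _ => inv_pos.2 (hfactor i))
    (prod_inv_one_sub_pow_le_tprod (by positivity) hx1 s)

lemma pow_mul_inv_gammaq_le_prod_pow_sub_pow {q w m : ℕ} (hq : 1 < q) (hw : w ≤ m) :
    (q : ℝ) ^ (w * m) * (gammaq q)⁻¹ ≤ ∏ j ∈ range w, ((q : ℝ) ^ m - (q : ℝ) ^ j) := by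
  set x := (q : ℝ)⁻¹
  have hq0 : (0 : ℝ) < q := by positivity
  have hx0 : 0 ≤ x := by positivity
  have hx1 : x ≤ 1 := inv_le_one_of_one_le₀ (by exact_mod_cast hq.le)
  -- `1 - q^(j-m) ≥ 1 - q^(j-w)`, and the latter are the first `w` factors of `γ_q⁻¹` reversed
  have hfactor : ∀ j ∈ range w, (q : ℝ) ^ m * (1 - x ^ (w - j)) ≤ (q : ℝ) ^ m - (q : ℝ) ^ j := by
    intro j hj
    have hjm : j ≤ m := (mem_range.1 hj).le.trans hw
    have hpow : (q : ℝ) ^ m * x ^ (m - j) = (q : ℝ) ^ j := by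
      rw [← Nat.add_sub_cancel' hjm, pow_add, Nat.add_sub_cancel_left, inv_pow, mul_assoc,
        mul_inv_cancel₀ (by positivity), mul_one]
    have hmono : x ^ (m - j) ≤ x ^ (w - j) := pow_le_pow_of_le_one hx0 hx1 (by omega)
    nlinarith [pow_pos hq0 m]
  calc (q : ℝ) ^ (w * m) * (gammaq q)⁻¹
      ≤ (q : ℝ) ^ (w * m) * ∏ j ∈ range w, (1 - x ^ (j + 1)) := by
        gcongr; exact inv_gammaq_le_prod hq _
    _ = ∏ j ∈ range w, ((q : ℝ) ^ m * (1 - x ^ (w - j))) := by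
        rw [prod_mul_distrib, prod_const, card_range, ← pow_mul, mul_comm w m,
          ← prod_range_reflect _ w]
        congr 1
        refine prod_congr rfl fun j hj => ?_
        rw [show w - 1 - j + 1 = w - j by have := mem_range.1 hj; omega]
    _ ≤ _ := prod_le_prod (fun j _ => mul_nonneg (by positivity)
        (sub_nonneg.2 (pow_le_one₀ hx0 hx1))) hfactor

section RankWeight

variable (Fq : Type) {Fqm : Type} [Field Fq] [Field Fqm] [Algebra Fq Fqm] {ℓ η : ℕ}

lemma rkw_le_card (v : Fin η → Fqm) : rkw Fq v ≤ η :=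
  (finrank_range_le_card (R := Fq) v).trans_eq (Fintype.card_fin η)

lemma rkw_le_finrank [Module.Finite Fq Fqm] (v : Fin η → Fqm) :
    rkw Fq v ≤ Module.finrank Fq Fqm :=
  Submodule.finrank_le _

lemma rkw_add_le [Module.Finite Fq Fqm] (u v : Fin η → Fqm) :
    rkw Fq (u + v) ≤ rkw Fq u + rkw Fq v := by
  have hle : Submodule.span Fq (Set.range (u + v)) ≤
      Submodule.span Fq (Set.range u) ⊔ Submodule.span Fq (Set.range v) := by
    rw [Submodule.span_le]
    rintro _ ⟨j, rfl⟩
    exact add_mem (Submodule.mem_sup_left (Submodule.subset_span ⟨j, rfl⟩))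
      (Submodule.mem_sup_right (Submodule.subset_span ⟨j, rfl⟩))
  exact (Submodule.finrank_mono hle).trans (Submodule.finrank_add_le_finrank_add_finrank _ _)

lemma rkw_neg (v : Fin η → Fqm) : rkw Fq (-v) = rkw Fq v := by
  have hrange : Set.range (-v) = -Set.range v := by
    ext y
    simp [neg_eq_iff_eq_neg]
  rw [rkw, rkw, hrange, Submodule.span_neg]

lemma rkw_eq_zero_iff [Module.Finite Fq Fqm] {v : Fin η → Fqm} : rkw Fq v = 0 ↔ v = 0 := by
  rw [rkw, Submodule.finrank_eq_zero, Submodule.span_eq_bot, Set.forall_mem_range, funext_iff]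
  rfl

lemma srw_add_le [Module.Finite Fq Fqm] (x y : Fin ℓ → Fin η → Fqm) :
    srw Fq (x + y) ≤ srw Fq x + srw Fq y := by
  rw [srw, srw, srw, ← sum_add_distrib]
  exact sum_le_sum fun i _ => rkw_add_le Fq (x i) (y i)

lemma srw_neg (x : Fin ℓ → Fin η → Fqm) : srw Fq (-x) = srw Fq x :=
  sum_congr rfl fun i _ => rkw_neg Fq (x i)

lemma srw_pos [Module.Finite Fq Fqm] {x : Fin ℓ → Fin η → Fqm} (hx : x ≠ 0) : 0 < srw Fq x := by
  obtain ⟨i, hi⟩ := Function.ne_iff.1 hx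
  exact (Nat.pos_of_ne_zero ((rkw_eq_zero_iff Fq).not.2 hi)).trans_le
    (single_le_sum (fun j _ => Nat.zero_le (rkw Fq (x j))) (mem_univ i))

lemma srw_le_mul_min [Module.Finite Fq Fqm] (x : Fin ℓ → Fin η → Fqm) :
    srw Fq x ≤ ℓ * min (Module.finrank Fq Fqm) η := by
  simpa [srw] using sum_le_sum fun i (_ : i ∈ univ) =>
    le_min (rkw_le_finrank Fq (x i)) (rkw_le_card Fq (x i))

noncomputable def extendBySpan {w : ℕ} (a : Fin w → Fqm) (M : Fin w → Fin (η - w) → Fq) :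
    Fin η → Fqm :=
  fun j => if h : (j : ℕ) < w then a ⟨j, h⟩ else ∑ i, M i ⟨j - w, by omega⟩ • a i

lemma rkw_extendBySpan_le [Module.Finite Fq Fqm] {w : ℕ} (a : Fin w → Fqm)
    (M : Fin w → Fin (η - w) → Fq) :
    rkw Fq (extendBySpan Fq a M) ≤ w := by
  have hle : Submodule.span Fq (Set.range (extendBySpan Fq a M)) ≤
      Submodule.span Fq (Set.range a) := by
    rw [Submodule.span_le]
    rintro _ ⟨j, rfl⟩
    unfold extendBySpan
    split_ifs
    · exact Submodule.subset_span ⟨_, rfl⟩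
    · exact Submodule.sum_mem _ fun i _ =>
        Submodule.smul_mem _ _ (Submodule.subset_span ⟨i, rfl⟩)
  exact (Submodule.finrank_mono hle).trans (rkw_le_card Fq a)

lemma extendBySpan_injective {w : ℕ} (hw : w ≤ η) :
    Function.Injective fun p : {a : Fin w → Fqm // LinearIndependent Fq a} ×
      (Fin w → Fin (η - w) → Fq) => extendBySpan Fq p.1.1 p.2 := by
  rintro ⟨⟨a, ha⟩, M⟩ ⟨⟨a', ha'⟩, M'⟩ h
  simp only at h
  obtain rfl : a = a' := funext fun i => by
    simpa [extendBySpan] using congrFun h ⟨i, i.isLt.trans_le hw⟩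
  obtain rfl : M = M' := funext fun i => funext fun j => by
    have hj := congrFun h ⟨w + j, by omega⟩
    simp only [extendBySpan, add_lt_iff_neg_left, not_lt_zero, dite_false,
      Nat.add_sub_cancel_left] at hj
    rw [← sub_eq_zero, ← sum_sub_distrib] at hj
    simp_rw [← sub_smul] at hj
    exact sub_eq_zero.1 (Fintype.linearIndependent_iff.1 ha _ hj i)
  rfl

lemma card_linearIndependent_mul_le_card_rkw_le [Fintype Fq] [Finite Fqm] {w : ℕ} (hw : w ≤ η) :
    Nat.card {a : Fin w → Fqm // LinearIndependent Fq a} * Fintype.card Fq ^ (w * (η - w)) ≤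
      Nat.card {v : Fin η → Fqm // rkw Fq v ≤ w} := by
  have hM : Nat.card (Fin w → Fin (η - w) → Fq) = Fintype.card Fq ^ (w * (η - w)) := by
    simp [Nat.card_eq_fintype_card, pow_mul']
  rw [← hM, ← Nat.card_prod]
  exact Nat.card_le_card_of_injective
    (fun p => ⟨extendBySpan Fq p.1.1 p.2, rkw_extendBySpan_le Fq p.1.1 p.2⟩)
    fun p p' h => extendBySpan_injective Fq hw (congrArg Subtype.val h)

lemma prod_card_rkw_le_le_volB [Finite Fqm] {t : ℕ} (w : Fin ℓ → ℕ) (hw : ∑ i, w i ≤ t) :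
    ∏ i, Nat.card {v : Fin η → Fqm // rkw Fq v ≤ w i} ≤ VolB Fq Fqm ℓ η t := by
  rw [VolB, ← Nat.card_pi]
  refine Nat.card_le_card_of_injective
    (fun y => ⟨fun i => (y i).1, (sum_le_sum fun i _ => (y i).2).trans hw⟩) fun y y' h => ?_
  funext i
  exact Subtype.ext (congrFun (congrArg Subtype.val h) i)

-- The balls of radius `t` around the codewords are disjoint.
lemma card_mul_volB_le [Finite Fqm] {C : Submodule Fqm (Fin ℓ → Fin η → Fqm)} {t : ℕ}
    (hC : ∀ c ∈ C, c ≠ 0 → 2 * t < srw Fq c) :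
    Nat.card C * VolB Fq Fqm ℓ η t ≤ Nat.card Fqm ^ (ℓ * η) := by
  have hspace : Nat.card (Fin ℓ → Fin η → Fqm) = Nat.card Fqm ^ (ℓ * η) := by
    simp [Nat.card_pi, pow_mul']
  rw [VolB, ← Nat.card_prod, ← hspace]
  refine Nat.card_le_card_of_injective (fun p => (p.1 : Fin ℓ → Fin η → Fqm) + p.2.1) ?_
  rintro ⟨c, e⟩ ⟨c', e'⟩ h
  have hdiff : (c : Fin ℓ → Fin η → Fqm) - c' = e'.1 - e.1 := by
    simp only at h
    linear_combination h
  obtain hcc | hcc := eq_or_ne ((c : Fin ℓ → Fin η → Fqm) - c') 0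
  · have hc : c = c' := Subtype.ext (sub_eq_zero.1 hcc)
    subst hc
    simp only [add_right_inj] at h
    rw [Subtype.ext h]
  · have hle : srw Fq (e'.1 - e.1) ≤ 2 * t := by
      rw [sub_eq_add_neg]
      have := srw_add_le Fq e'.1 (-e.1)
      rw [srw_neg] at this
      linarith [e.2, e'.2]
    have := hC _ (sub_mem c.2 c'.2) hcc
    rw [hdiff] at this
    omega

end RankWeight

lemma exists_balanced_weights {ℓ μ t : ℕ} (hℓ : 0 < ℓ) (ht : t ≤ ℓ * μ) :
    ∃ w : Fin ℓ → ℕ, (∀ i, w i ≤ μ) ∧ ∑ i, w i = t ∧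
      ∑ i, (w i : ℝ) ^ 2 ≤ (t : ℝ) ^ 2 / ℓ + ℓ / 4 := by
  obtain ⟨t₀, r, htr, hrℓ⟩ : ∃ t₀ r, ℓ * t₀ + r = t ∧ r < ℓ :=
    ⟨t / ℓ, t % ℓ, Nat.div_add_mod t ℓ, Nat.mod_lt t hℓ⟩
  have hcount : ∑ i : Fin ℓ, (if (i : ℕ) < r then 1 else 0) = r := by
    rw [sum_boole, Fin.card_filter_val_lt, min_eq_right hrℓ.le]
    rfl
  refine ⟨fun i => t₀ + if (i : ℕ) < r then 1 else 0, fun i => ?_, ?_, ?_⟩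
  · have ht₀ : t₀ ≤ μ := Nat.le_of_mul_le_mul_left (by omega) hℓ
    have hr : r = 0 ∨ t₀ < μ := or_iff_not_imp_left.2 fun hr => ht₀.lt_of_ne (by rintro rfl; omega)
    dsimp only
    split_ifs <;> omega
  · rw [sum_add_distrib, sum_const, card_univ, Fintype.card_fin, hcount, smul_eq_mul, htr]
  · have hsq : ∀ i : Fin ℓ, (((t₀ + if (i : ℕ) < r then 1 else 0 : ℕ)) : ℝ) ^ 2 =
        (t₀ : ℝ) ^ 2 + (2 * t₀ + 1) * ((if (i : ℕ) < r then 1 else 0 : ℕ) : ℝ) := by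
      intro i
      split_ifs <;> push_cast <;> ring
    have hsum : ∑ i : Fin ℓ, (((t₀ + if (i : ℕ) < r then 1 else 0 : ℕ)) : ℝ) ^ 2 =
        ℓ * (t₀ : ℝ) ^ 2 + (2 * t₀ + 1) * r := by
      rw [sum_congr rfl fun i _ => hsq i, sum_add_distrib, ← mul_sum, ← Nat.cast_sum, hcount]
      simp
    have hℓ' : (0 : ℝ) < ℓ := by exact_mod_cast hℓ
    -- `ℓ ∑ wᵢ² = t² + r (ℓ - r)`, and `r (ℓ - r) ≤ ℓ² / 4`
    have hkey : (ℓ * (t₀ : ℝ) ^ 2 + (2 * t₀ + 1) * r) * ℓ ≤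
        ((ℓ * t₀ + r : ℕ) : ℝ) ^ 2 + ℓ ^ 2 / 4 := by
      push_cast
      nlinarith [sq_nonneg ((ℓ : ℝ) - 2 * r)]
    rw [hsum, ← htr, div_add_div _ _ hℓ'.ne' four_ne_zero, le_div_iff₀ (by positivity)]
    nlinarith [hkey]

section Volume

variable (Fq : Type) {Fqm : Type} [Field Fq] [Fintype Fq] [Field Fqm] [Finite Fqm]
  [Algebra Fq Fqm] {q m ℓ η : ℕ}

lemma pow_mul_inv_gammaq_le_card_rkw_le (hq : Fintype.card Fq = q)
    (hm : Module.finrank Fq Fqm = m) {w : ℕ} (hwm : w ≤ m) (hwη : w ≤ η) :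
    (q : ℝ) ^ (w * m + w * (η - w)) * (gammaq q)⁻¹ ≤
      Nat.card {v : Fin η → Fqm // rkw Fq v ≤ w} := by
  have hq1 : 1 < q := hq ▸ Fintype.one_lt_card
  have hcount := card_linearIndependent_mul_le_card_rkw_le Fq (Fqm := Fqm) hwη
  rw [card_linearIndependent (hm ▸ hwm), hq, hm,
    Fin.prod_univ_eq_prod_range (fun j => q ^ m - q ^ j)] at hcount
  have hcast : ((∏ j ∈ range w, (q ^ m - q ^ j) : ℕ) : ℝ) =
      ∏ j ∈ range w, ((q : ℝ) ^ m - (q : ℝ) ^ j) := by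
    push_cast
    refine prod_congr rfl fun j hj => ?_
    rw [Nat.cast_sub (Nat.pow_le_pow_right hq1.le ((mem_range.1 hj).le.trans hwm))]
    push_cast
    rfl
  calc (q : ℝ) ^ (w * m + w * (η - w)) * (gammaq q)⁻¹
      = (q : ℝ) ^ (w * m) * (gammaq q)⁻¹ * (q : ℝ) ^ (w * (η - w)) := by ring
    _ ≤ (∏ j ∈ range w, ((q : ℝ) ^ m - (q : ℝ) ^ j)) * (q : ℝ) ^ (w * (η - w)) := by
        gcongr
        exact pow_mul_inv_gammaq_le_prod_pow_sub_pow hq1 hwm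
    _ ≤ _ := by rw [← hcast]; exact_mod_cast hcount

lemma pow_sum_mul_inv_gammaq_pow_le_volB (hq : Fintype.card Fq = q)
    (hm : Module.finrank Fq Fqm = m) {t : ℕ} (w : Fin ℓ → ℕ) (hwm : ∀ i, w i ≤ m)
    (hwη : ∀ i, w i ≤ η) (hw : ∑ i, w i ≤ t) :
    (q : ℝ) ^ (∑ i, (w i * m + w i * (η - w i))) * ((gammaq q) ^ ℓ)⁻¹ ≤ VolB Fq Fqm ℓ η t := by
  have hγ : 0 < gammaq q := zero_lt_one.trans_le (one_le_gammaq (hq ▸ Fintype.one_lt_card))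
  calc (q : ℝ) ^ (∑ i, (w i * m + w i * (η - w i))) * ((gammaq q) ^ ℓ)⁻¹
      = ∏ i, ((q : ℝ) ^ (w i * m + w i * (η - w i)) * (gammaq q)⁻¹) := by
        rw [prod_mul_distrib, prod_pow_eq_pow_sum, prod_const, card_univ, Fintype.card_fin,
          inv_pow]
    _ ≤ ∏ i, (Nat.card {v : Fin η → Fqm // rkw Fq v ≤ w i} : ℝ) :=
        prod_le_prod (fun i _ => by positivity)
          fun i _ => pow_mul_inv_gammaq_le_card_rkw_le Fq hq hm (hwm i) (hwη i)
    _ ≤ VolB Fq Fqm ℓ η t := by exact_mod_cast prod_card_rkw_le_le_volB Fq w hw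

lemma rpow_mul_inv_gammaq_pow_le_volB (hq : Fintype.card Fq = q)
    (hm : Module.finrank Fq Fqm = m) {t : ℕ} (hℓ : 0 < ℓ) (ht : t ≤ ℓ * min m η) :
    (q : ℝ) ^ (((m : ℝ) + η - t / ℓ) * t - ℓ / 4) * ((gammaq q) ^ ℓ)⁻¹ ≤
      VolB Fq Fqm ℓ η t := by
  obtain ⟨w, hwμ, hwt, hwsq⟩ := exists_balanced_weights hℓ ht
  have hwη : ∀ i, w i ≤ η := fun i => (hwμ i).trans (min_le_right m η)
  have hS : ((∑ i, (w i * m + w i * (η - w i)) : ℕ) : ℝ) =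
      ((m : ℝ) + η) * t - ∑ i, (w i : ℝ) ^ 2 := by
    rw [← hwt, Nat.cast_sum, Nat.cast_sum, mul_sum, ← sum_sub_distrib]
    refine sum_congr rfl fun i _ => ?_
    push_cast [Nat.cast_sub (hwη i)]
    ring
  have hexp : ((m : ℝ) + η - t / ℓ) * t - ℓ / 4 ≤ ((∑ i, (w i * m + w i * (η - w i)) : ℕ) : ℝ) := by
    rw [hS]
    linarith [show ((m : ℝ) + η - t / ℓ) * t = ((m : ℝ) + η) * t - (t : ℝ) ^ 2 / ℓ by ring]
  have hq1 : (1 : ℝ) ≤ q := by exact_mod_cast (hq ▸ Fintype.card_pos : 0 < q)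
  have hγ : 0 < gammaq q := zero_lt_one.trans_le (one_le_gammaq (hq ▸ Fintype.one_lt_card))
  calc (q : ℝ) ^ (((m : ℝ) + η - t / ℓ) * t - ℓ / 4) * ((gammaq q) ^ ℓ)⁻¹
      ≤ (q : ℝ) ^ (∑ i, (w i * m + w i * (η - w i))) * ((gammaq q) ^ ℓ)⁻¹ := by
        rw [← Real.rpow_natCast (q : ℝ)]
        gcongr
    _ ≤ VolB Fq Fqm ℓ η t := pow_sum_mul_inv_gammaq_pow_le_volB Fq hq hm w
        (fun i => (hwμ i).trans (min_le_left m η)) hwη hwt.le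

end Volume

theorem stmt12_general (q m ℓ η k d : ℕ) (Fq Fqm : Type) [Field Fq] [Fintype Fq] [Field Fqm]
    [Fintype Fqm] [Algebra Fq Fqm] (hq : Fintype.card Fq = q)
    (hqm : Fintype.card Fqm = q ^ m)
    (C : Submodule Fqm (Fin ℓ → Fin η → Fqm)) (hk : Module.finrank Fqm C = k)
    (hd1 : ∀ c ∈ C, c ≠ 0 → d ≤ srw Fq c)
    (hd2 : ∃ c ∈ C, c ≠ 0 ∧ srw Fq c = d) :
    (q : ℝ) ^ (m * k) *
        (q : ℝ) ^ ((((m : ℝ) + η) - (((d - 1) / 2 : ℕ) : ℝ) / ℓ) * (((d - 1) / 2 : ℕ) : ℝ)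
          - (ℓ : ℝ) / 4) * ((gammaq q) ^ ℓ)⁻¹ ≤
      (q : ℝ) ^ (m * (ℓ * η)) := by
  have hq1 : 1 < q := hq ▸ Fintype.one_lt_card
  have hm : Module.finrank Fq Fqm = m := by
    have hcard := Module.card_eq_pow_finrank (K := Fq) (V := Fqm)
    rw [hq, hqm] at hcard
    exact Nat.pow_right_injective hq1 hcard.symm
  obtain ⟨c₀, hc₀, hc₀0, rfl⟩ := hd2
  have hd0 : 0 < srw Fq c₀ := srw_pos Fq hc₀0
  have hdμ : srw Fq c₀ ≤ ℓ * min m η := hm ▸ srw_le_mul_min Fq c₀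
  have hℓ : 0 < ℓ := Nat.pos_of_mul_pos_right (hd0.trans_le hdμ)
  have hC : Nat.card C = q ^ (m * k) := by
    rw [Module.natCard_eq_pow_finrank (K := Fqm), hk, Nat.card_eq_fintype_card, hqm, pow_mul]
  have hpack := card_mul_volB_le Fq (C := C) (t := (srw Fq c₀ - 1) / 2)
    fun c hc hc0 => by have := hd1 c hc hc0; omega
  rw [hC, Nat.card_eq_fintype_card, hqm, ← pow_mul] at hpack
  have hvol := rpow_mul_inv_gammaq_pow_le_volB Fq (Fqm := Fqm) (η := η) hq hm hℓ
    (t := (srw Fq c₀ - 1) / 2) (by omega)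
  rw [mul_assoc]
  calc _ ≤ (q : ℝ) ^ (m * k) * VolB Fq Fqm ℓ η ((srw Fq c₀ - 1) / 2) := by gcongr
    _ ≤ _ := by exact_mod_cast hpack

/-- Simplified sphere-packing bound in the sum-rank metric. -/
theorem stmt12 (q m ℓ η k d : ℕ) (Fq Fqm : Type) [Field Fq] [Fintype Fq] [Field Fqm]
    [Fintype Fqm] [Algebra Fq Fqm] (hq : Fintype.card Fq = q)
    (hqm : Fintype.card Fqm = q ^ m) (hℓ : 0 < ℓ) (hη : 0 < η) (hm : 0 < m)
    (C : Submodule Fqm (Fin ℓ → Fin η → Fqm)) (hk : Module.finrank Fqm C = k)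
    (hd1 : ∀ c ∈ C, c ≠ 0 → d ≤ srw Fq c)
    (hd2 : ∃ c ∈ C, c ≠ 0 ∧ srw Fq c = d) :
    (q : ℝ) ^ (m * k) *
        (q : ℝ) ^ ((((m : ℝ) + η) - (((d - 1) / 2 : ℕ) : ℝ) / ℓ) * (((d - 1) / 2 : ℕ) : ℝ)
          - (ℓ : ℝ) / 4) * ((gammaq q) ^ ℓ)⁻¹ ≤
      (q : ℝ) ^ (m * (ℓ * η)) :=
  stmt12_general q m ℓ η k d Fq Fqm hq hqm C hk hd1 hd2
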